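/- arXiv:1408.4631 — 7 statements merged into one kernel-verified Lean document; each statement's English description precedes it below -/
import Mathlib

section
/- Kneading is a bijection on the set of finite sequences of positive integers: the map that removes the rightmost entry, pinches both ends of the remainder, and prepends the removed entry on the left is a two-sided inverse of kneading. -/
/-- The continuant of a finite sequence of integers. -/
def cont : List ℤ → ℤ
  | [] => 1
  | [q] => q
  | q :: r :: t => q * cont (r :: t) + cont t

/-- The continuant of the sequence with first and last entries removed,
with the convention that it is `0` for sequences of length `≤ 1`. -/
def contMid : List ℤ → ℤ
  | [] => 0
  | [_] => 0
  | _ :: t => cont t.dropLast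

/-- The alternant of a finite sequence of integers. -/
def alternant (l : List ℤ) : ℤ := cont l - contMid l

/-- Pinch the left end of a sequence. -/
def pinchL : List ℤ → List ℤ
  | [] => []
  | [x] => if x = 1 then [x] else [1, x - 1]
  | x :: y :: t => if x = 1 then (y + 1) :: t else 1 :: (x - 1) :: y :: t

/-- Pinch the right end of a sequence. -/
def pinchR (l : List ℤ) : List ℤ := (pinchL l.reverse).reverse

/-- Knead a sequence: remove the leftmost entry, pinch both ends of the
remainder, and append the removed entry on the right. -/
def knead : List ℤ → List ℤ
  | [] => []
  | x :: t => pinchR (pinchL t) ++ [x]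

/-- The inverse kneading operation: remove the rightmost entry, pinch both ends
of the remainder, and prepend the removed entry on the left. -/
def unknead (l : List ℤ) : List ℤ :=
  match l.getLast? with
  | none => []
  | some x => x :: pinchL (pinchR l.dropLast)


/-! On sequences of positive integers both pinches are involutions that preserve positivity.
Kneading is `x :: t ↦ pinchR (pinchL t) ++ [x]` and unkneading is `t ++ [x] ↦ x :: pinchL (pinchR t)`,
so each undoes the other by cancelling the two pinches from the inside out. -/

lemma pinchL_pos : ∀ {l : List ℤ}, (∀ x ∈ l, 0 < x) → ∀ x ∈ pinchL l, 0 < x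
  | [], _ => by simp [pinchL]
  | [x], h => by
    have hx0 : 0 < x := h x (List.mem_singleton_self x)
    by_cases hx : x = 1
    · simp [pinchL, hx]
    · simp [pinchL, hx]; omega
  | x :: y :: t, h => by
    obtain ⟨hx0, hy, ht⟩ : 0 < x ∧ 0 < y ∧ ∀ z ∈ t, 0 < z := by simpa using h
    by_cases hx : x = 1
    · simp only [pinchL, hx, if_true, List.forall_mem_cons]
      exact ⟨by omega, ht⟩
    · simp only [pinchL, hx, if_false, List.forall_mem_cons]
      exact ⟨by omega, by omega, hy, ht⟩

lemma pinchL_pinchL : ∀ {l : List ℤ}, (∀ x ∈ l, 0 < x) → pinchL (pinchL l) = l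
  | [], _ => rfl
  | [x], _ => by by_cases hx : x = 1 <;> simp [pinchL, hx]
  | x :: y :: t, h => by
    have hy : y ≠ 0 := (h y (by simp)).ne'
    by_cases hx : x = 1
    · cases t <;> simp [pinchL, hx, hy]
    · simp [pinchL, hx]

lemma pinchR_pos {l : List ℤ} (h : ∀ x ∈ l, 0 < x) : ∀ x ∈ pinchR l, 0 < x := by
  simpa [pinchR] using pinchL_pos (l := l.reverse) (by simpa using h)

lemma pinchR_pinchR {l : List ℤ} (h : ∀ x ∈ l, 0 < x) : pinchR (pinchR l) = l := by
  simp [pinchR, pinchL_pinchL (l := l.reverse) (by simpa using h)]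

lemma knead_cons (x : ℤ) (t : List ℤ) : knead (x :: t) = pinchR (pinchL t) ++ [x] := rfl

lemma unknead_append_singleton (t : List ℤ) (x : ℤ) :
    unknead (t ++ [x]) = x :: pinchL (pinchR t) := by
  simp [unknead]

theorem unknead_is_inverse (l : List ℤ) (hpos : ∀ x ∈ l, 0 < x) :
    unknead (knead l) = l ∧ knead (unknead l) = l := by
  constructor
  · obtain _ | ⟨x, t⟩ := l
    · rfl
    have ht : ∀ z ∈ t, 0 < z := fun z hz => hpos z (List.mem_cons_of_mem x hz)
    rw [knead_cons, unknead_append_singleton, pinchR_pinchR (pinchL_pos ht), pinchL_pinchL ht]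
  · obtain rfl | ⟨t, x, rfl⟩ := l.eq_nil_or_concat'
    · rfl
    have ht : ∀ z ∈ t, 0 < z := fun z hz => hpos z (List.mem_append_left [x] hz)
    rw [unknead_append_singleton, knead_cons, pinchL_pinchL (pinchR_pos ht), pinchR_pinchR ht]
end

section
/- If (q_1, ..., q_l) is a finite sequence of positive integers with alternant a, then the binary quadratic form [q_2,...,q_l] x² + ([q_1,...,q_l] + [q_2,...,q_{l-1}]) xy + [q_1,...,q_{l-1}] y² has discriminant a² + (-1)^l · 4. -/
theorem key : ∀ l : List ℤ, l ≠ [] →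
    cont l * contMid l - cont (l.drop 1) * cont l.dropLast = (-1) ^ l.length
  | [], h => absurd rfl h
  | [q], _ => by simp [cont, contMid]
  | [q, r], _ => by simp [cont, contMid]; ring
  | q :: r :: s :: t, _ => by
    have ih := key (r :: s :: t) (by simp)
    simp only [cont, contMid, List.drop, List.dropLast] at ih ⊢
    have hp : ((-1 : ℤ)) ^ (q :: r :: s :: t).length = -(-1) ^ (r :: s :: t).length := by
      simp [pow_succ]
    rw [hp]
    ring_nf at ih ⊢
    linarith

theorem form_discriminant (l : List ℤ) (hne : l ≠ []) (hpos : ∀ x ∈ l, 0 < x)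
    (a : ℤ) (ha : alternant l = a) :
    (cont l + contMid l) ^ 2 - 4 * cont (l.drop 1) * cont l.dropLast =
      a ^ 2 + (-1) ^ l.length * 4 := by
  have h := key l hne
  subst ha
  unfold alternant
  linear_combination 4 * h
end

section
/- There are only finitely many Zagier-reduced binary quadratic forms with a given positive discriminant D. -/
theorem zagier_reduced_finite (D : ℤ) (hD : 0 < D) :
    {p : ℤ × ℤ × ℤ | 0 < p.1 ∧ 0 < p.2.2 ∧ p.1 + p.2.2 < p.2.1 ∧
      p.2.1 ^ 2 - 4 * p.1 * p.2.2 = D}.Finite := by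
  apply Set.Finite.subset
    (((Set.finite_Icc 1 D).prod ((Set.finite_Icc 1 (2*D+1)).prod (Set.finite_Icc 1 D))))
  rintro ⟨a, b, c⟩ ⟨ha, hc, hb, hd⟩
  simp only [Set.mem_setOf_eq] at *
  have hA : a ≤ D := by nlinarith [sq_nonneg (a - c)]
  have hC : c ≤ D := by nlinarith [sq_nonneg (a - c)]
  have hB : b ≤ 2*D+1 := by nlinarith [mul_le_mul hA hC (by linarith) (by linarith)]
  refine ⟨⟨ha, hA⟩, ⟨by linarith, hB⟩, ⟨hc, hC⟩⟩
end

section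
/- Let f = Ax² + Bxy + Cy² be a Zagier-reduced form of discriminant D = a² + (-1)^s · 4 > 0 with a > 2 an integer and s ∈ {0,1}. Then a > |A − C|, and consequently z = (a + B)/2 is an integer satisfying z > A and z > C. -/
theorem zagier_reduced_z_bounds (A B C a : ℤ) (s : ℕ) (hs : s = 0 ∨ s = 1)
    (hA : 0 < A) (hC : 0 < C) (hB : A + C < B) (ha : 2 < a)
    (hdisc : B ^ 2 - 4 * A * C = a ^ 2 + (-1) ^ s * 4)
    (hD : 0 < a ^ 2 + (-1) ^ s * 4) :
    |A - C| < a ∧ 2 ∣ a + B ∧ A < (a + B) / 2 ∧ C < (a + B) / 2 := by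
  have hs4 : ((-1 : ℤ)) ^ s * 4 = 4 ∨ ((-1 : ℤ)) ^ s * 4 = -4 := by
    rcases hs with h | h <;> subst h <;> simp
  have hsq : (A - C) ^ 2 < a ^ 2 := by
    rcases hs4 with h | h <;> rw [h] at hdisc <;> nlinarith
  have h1 : A - C < a := by nlinarith [sq_nonneg (A - C + a)]
  have h2 : -a < A - C := by nlinarith [sq_nonneg (A - C - a)]
  have habs : |A - C| < a := abs_lt.mpr ⟨h2, h1⟩
  have hpar : Even (a + B) := by
    have hev : Even (B ^ 2 - a ^ 2) := by
      rcases hs4 with h | h <;> rw [h] at hdisc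
      · exact ⟨2 * A * C + 2, by linear_combination hdisc⟩
      · exact ⟨2 * A * C - 2, by linear_combination hdisc⟩
    rw [Int.even_sub, Int.even_pow' (by norm_num), Int.even_pow' (by norm_num)] at hev
    rw [Int.even_add]
    tauto
  obtain ⟨k, hk⟩ := hpar
  refine ⟨habs, ⟨k, by omega⟩, ?_, ?_⟩ <;> omega
end

section
/- Let f = Ax² + Bxy + Cy² be a Zagier-reduced form of discriminant D = a² + (-1)^s · 4 > 0 with a > 2 and s ∈ {0,1}, and set z = (a+B)/2. Then z divides AC + (-1)^s, so gcd(A, z) = 1 and AC ≡ (-1)^{s+1} (mod z). -/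
/-!
Writing the discriminant condition as `(B - a)(B + a) = 4 (AC + (-1)^s)`, the squares `B²` and `a²`
agree mod 2, so `a + B = 2z` is even and `B - a = 2(z - a)`; hence `AC + (-1)^s = z (z - a)`.
Since `(-1)^s` is a unit, any common divisor of `A` and `z` divides a unit.
-/

theorem Int.two_dvd_add_of_two_dvd_sq_sub_sq {a b : ℤ} (h : 2 ∣ b ^ 2 - a ^ 2) : 2 ∣ a + b := by
  rw [← even_iff_two_dvd] at h ⊢
  simpa [Int.even_add, Int.even_sub, Int.even_pow, iff_comm] using h

theorem Int.half_add_dvd_of_sq_sub_sq_eq {a b m : ℤ} (h : b ^ 2 - a ^ 2 = 4 * m) :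
    (a + b) / 2 ∣ m := by
  have h2 : 2 ∣ b ^ 2 - a ^ 2 := ⟨2 * m, by rw [h]; ring⟩
  obtain ⟨z, hz⟩ := Int.two_dvd_add_of_two_dvd_sq_sub_sq h2
  obtain rfl : b = 2 * z - a := by linarith
  have hm : 4 * m = 4 * (z * (z - a)) := by rw [← h]; ring
  rw [hz, Int.mul_ediv_cancel_left z two_ne_zero, mul_left_cancel₀ four_ne_zero hm]
  exact dvd_mul_right z (z - a)

theorem IsCoprime.of_dvd_mul_add_unit {R : Type*} [CommRing R] {x y z u : R} (hu : IsUnit u)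
    (h : z ∣ x * y + u) : IsCoprime x z := by
  obtain ⟨v, rfl⟩ := hu
  obtain ⟨k, hk⟩ := h
  exact ⟨-y * ↑v⁻¹, k * ↑v⁻¹, by linear_combination (↑v⁻¹ : R) * hk.symm + v.inv_mul⟩

theorem Int.modEq_neg_of_dvd_add {n x u : ℤ} (h : n ∣ x + u) : x ≡ -u [ZMOD n] :=
  Int.modEq_iff_dvd.mpr (by simpa [neg_sub_left] using h.neg_right)

theorem zagier_reduced_z_divides_general (A B C a : ℤ) (s : ℕ)
    (hdisc : B ^ 2 - 4 * A * C = a ^ 2 + (-1) ^ s * 4) :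
    (a + B) / 2 ∣ A * C + (-1) ^ s ∧ Int.gcd A ((a + B) / 2) = 1 ∧
      A * C ≡ (-1) ^ (s + 1) [ZMOD ((a + B) / 2)] := by
  have hdvd : (a + B) / 2 ∣ A * C + (-1) ^ s :=
    Int.half_add_dvd_of_sq_sub_sq_eq (by linear_combination hdisc)
  refine ⟨hdvd, ?_, ?_⟩
  · rw [← Int.isCoprime_iff_gcd_eq_one]
    exact IsCoprime.of_dvd_mul_add_unit (isUnit_neg_one.pow s) hdvd
  · rw [pow_succ, mul_neg_one]
    exact Int.modEq_neg_of_dvd_add hdvd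

theorem zagier_reduced_z_divides (A B C a : ℤ) (s : ℕ) (hs : s = 0 ∨ s = 1)
    (hA : 0 < A) (hC : 0 < C) (hB : A + C < B) (ha : 2 < a)
    (hdisc : B ^ 2 - 4 * A * C = a ^ 2 + (-1) ^ s * 4)
    (hD : 0 < a ^ 2 + (-1) ^ s * 4) :
    (a + B) / 2 ∣ A * C + (-1) ^ s ∧ Int.gcd A ((a + B) / 2) = 1 ∧
      A * C ≡ (-1) ^ (s + 1) [ZMOD ((a + B) / 2)] :=
  zagier_reduced_z_divides_general A B C a s hdisc
end

section
/- For an integer a ≥ 3, the sequence (1, a−k, k−1, 1) for 2 ≤ k ≤ a−1, as well as (a,1) and (1,a), all have alternant a and entry sum a+1; moreover kneading maps (a,1) to (1,a), maps (1,a) to (1,a−2,1,1), maps (1,a−k,k−1,1) to (1,a−k−1,k,1) for 2 ≤ k ≤ a−3, and maps (1,1,a−2,1) to (a,1). -/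
theorem principal_kneading_cycle (a : ℤ) (ha : 3 ≤ a) :
    alternant [a, 1] = a ∧ alternant [1, a] = a ∧
    ([a, 1].sum = a + 1) ∧ ([1, a].sum = a + 1) ∧
    (∀ k : ℤ, 2 ≤ k → k ≤ a - 1 →
      alternant [1, a - k, k - 1, 1] = a ∧ [1, a - k, k - 1, 1].sum = a + 1) ∧
    knead [a, 1] = [1, a] ∧ knead [1, a] = [1, a - 2, 1, 1] ∧
    (∀ k : ℤ, 2 ≤ k → k ≤ a - 3 →
      knead [1, a - k, k - 1, 1] = [1, a - k - 1, k, 1]) ∧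
    knead [1, 1, a - 2, 1] = [a, 1] := by
  have h1 : a ≠ 1 := by omega
  have h2 : a - 1 ≠ 1 := by omega
  refine ⟨?_, ?_, ?_, ?_, ?_, ?_, ?_, ?_, ?_⟩
  · simp [alternant, cont, contMid]
  · simp [alternant, cont, contMid]
  · simp
  · simp [add_comm]
  · intro k hk1 hk2
    constructor
    · simp [alternant, cont, contMid]; ring
    · simp; ring
  · simp [knead, pinchL, pinchR, h1]
  · simp [knead, pinchL, pinchR, h1, h2]
    omega
  · intro k hk1 hk2
    have h3 : a - k ≠ 1 := by omega
    simp [knead, pinchL, pinchR, h3]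
  · simp [knead, pinchL, pinchR]
    omega
end

section
/- If (q_1, ..., q_l) is a finite sequence of positive integers of even length l with alternant a, then q_1 + q_2 + ... + q_l ≤ a + 1, with equality if and only if the sequence has the form (a,1), (1,a), or (1, a−k, k−1, 1) for some 2 ≤ k ≤ a−1. -/
/-! The quantity `alternant l - l.sum` drops by at least
`(x - 1) * (cont (y :: z :: t) - 1) + (cont t - 1)`, a sum of nonnegative terms, when
`x :: y :: z :: t` is shortened to `z :: t`. Since it equals `(x - 1) * (y - 1) - 1 ≥ -1` on
pairs, it is `≥ -1` on every even-length positive sequence, and in the equality case each of the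
dropped terms vanishes, which forces `x = 1` and `t = [1]`. -/

theorem cont_cons_of_ne_nil (x : ℤ) {t : List ℤ} (ht : t ≠ []) :
    cont (x :: t) = x * cont t + cont t.tail := by
  obtain ⟨r, t, rfl⟩ := List.exists_cons_of_ne_nil ht
  rfl

theorem alternant_cons_of_ne_nil (x : ℤ) {t : List ℤ} (ht : t ≠ []) :
    alternant (x :: t) = cont (x :: t) - cont t.dropLast := by
  obtain ⟨r, t, rfl⟩ := List.exists_cons_of_ne_nil ht
  rfl

theorem cont_append_singleton : ∀ {s : List ℤ} (x : ℤ), s ≠ [] →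
    cont (s ++ [x]) = x * cont s + cont s.dropLast
  | [y], x, _ => by
    simp only [List.cons_append, List.nil_append, cont, List.dropLast_singleton]; ring
  | [y, z], x, _ => by
    simp only [List.cons_append, List.nil_append, cont, List.dropLast_cons_cons,
      List.dropLast_singleton]
    ring
  | y :: z :: w :: r, x, _ => by
    have h₁ := cont_append_singleton (s := z :: w :: r) x (by simp)
    have h₂ := cont_append_singleton (s := w :: r) x (by simp)
    simp only [List.cons_append, List.dropLast_cons_cons] at h₁ h₂ ⊢
    simp only [cont] at h₁ ⊢
    rw [h₁, h₂]
    ring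

theorem one_le_cont : ∀ {l : List ℤ}, (∀ x ∈ l, 0 < x) → 1 ≤ cont l
  | [], _ => le_rfl
  | [q], h => h q (by simp)
  | q :: r :: t, h => by
    have hq := h q (by simp)
    have h₁ := one_le_cont (l := r :: t) fun x hx => h x (by simp_all)
    have h₂ := one_le_cont (l := t) fun x hx => h x (by simp_all)
    simp only [cont]
    nlinarith

theorem eq_singleton_one_of_cont_eq_one : ∀ {l : List ℤ}, l ≠ [] → (∀ x ∈ l, 0 < x) →
    cont l = 1 → l = [1]
  | [q], _, _, h => by simp_all [cont]
  | q :: r :: t, _, h, h₁ => by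
    have hq := h q (by simp)
    have h₂ := one_le_cont (l := r :: t) fun x hx => h x (by simp_all)
    have h₃ := one_le_cont (l := t) fun x hx => h x (by simp_all)
    simp only [cont] at h₁
    nlinarith

theorem cont_dropLast_lt_cont {l : List ℤ} (hl : 2 ≤ l.length) (h : ∀ x ∈ l, 0 < x) :
    cont l.dropLast < cont l := by
  have hne : l ≠ [] := List.ne_nil_of_length_pos (by omega)
  have hd : l.dropLast ≠ [] := List.ne_nil_of_length_pos (by simp; omega)
  have key := cont_append_singleton (l.getLast hne) hd
  rw [List.dropLast_append_getLast hne] at key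
  have hlast := h _ (List.getLast_mem hne)
  have h₁ := one_le_cont fun x hx => h x (List.dropLast_subset l hx)
  have h₂ := one_le_cont fun x hx => h x (List.dropLast_subset l (List.dropLast_subset _ hx))
  nlinarith

theorem one_lt_cont {l : List ℤ} (hl : 2 ≤ l.length) (h : ∀ x ∈ l, 0 < x) : 1 < cont l :=
  (one_le_cont fun x hx => h x (List.dropLast_subset l hx)).trans_lt (cont_dropLast_lt_cont hl h)

theorem alternant_pair_sub_sum (x y : ℤ) :
    alternant [x, y] - [x, y].sum = (x - 1) * (y - 1) - 1 := by
  simp only [alternant, cont, contMid, List.dropLast_singleton, List.sum_cons, List.sum_nil]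
  ring

theorem alternant_cons_sub_sum (x : ℤ) {t : List ℤ} (ht : t ≠ []) :
    alternant (x :: t) - (x :: t).sum =
      alternant (1 :: t) - (1 :: t).sum + (x - 1) * (cont t - 1) := by
  simp only [alternant_cons_of_ne_nil _ ht, cont_cons_of_ne_nil _ ht, List.sum_cons]
  ring

theorem alternant_one_cons_cons_sub_sum (y z : ℤ) {t : List ℤ} (ht : t ≠ []) :
    alternant (1 :: y :: z :: t) - (1 :: y :: z :: t).sum =
      alternant (z :: t) - (z :: t).sum + y * (cont (z :: t) - cont (z :: t).dropLast - 1) +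
        (cont t - 1) := by
  simp only [alternant_cons_of_ne_nil _ ht, alternant_cons_of_ne_nil _ (List.cons_ne_nil _ _),
    List.dropLast_cons_of_ne_nil ht, List.dropLast_cons_cons, cont, List.sum_cons]
  ring

theorem alternant_sub_sum_cons_cons_ge {x y z : ℤ} {t : List ℤ} (ht : t ≠ [])
    (h : ∀ u ∈ x :: y :: z :: t, 0 < u) :
    alternant (z :: t) - (z :: t).sum + (x - 1) * (cont (y :: z :: t) - 1) + (cont t - 1) ≤
      alternant (x :: y :: z :: t) - (x :: y :: z :: t).sum := by
  have hy := h y (by simp)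
  have hdrop : cont (z :: t).dropLast < cont (z :: t) :=
    cont_dropLast_lt_cont (by simpa [Nat.one_le_iff_ne_zero] using ht) fun u hu => h u (by simp_all)
  rw [alternant_cons_sub_sum x (List.cons_ne_nil y _), alternant_one_cons_cons_sub_sum y z ht]
  nlinarith

theorem neg_one_le_alternant_sub_sum : ∀ {l : List ℤ}, (∀ x ∈ l, 0 < x) → Even l.length →
    -1 ≤ alternant l - l.sum
  | [], _, _ => by simp [alternant, cont, contMid]
  | [_], _, he => by simp at he
  | [x, y], h, _ => by
    have hx := h x (by simp)
    have hy := h y (by simp)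
    rw [alternant_pair_sub_sum]
    nlinarith
  | [_, _, _], _, he => by simp [Nat.even_iff] at he
  | x :: y :: z :: w :: r, h, he => by
    have hx := h x (by simp)
    have ih := neg_one_le_alternant_sub_sum (l := z :: w :: r) (fun u hu => h u (by simp_all))
      (by simpa [Nat.even_add_one] using he)
    have hc₁ := one_le_cont (l := y :: z :: w :: r) fun u hu => h u (by simp_all)
    have hc₂ := one_le_cont (l := w :: r) fun u hu => h u (by simp_all)
    have := alternant_sub_sum_cons_cons_ge (List.cons_ne_nil w r) h
    nlinarith

theorem eq_of_alternant_sub_sum_eq_neg_one {l : List ℤ} (h : ∀ x ∈ l, 0 < x)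
    (he : Even l.length) (hsum : alternant l - l.sum = -1) :
    (∃ x, l = [x, 1]) ∨ (∃ y, l = [1, y]) ∨ ∃ y z, l = [1, y, z, 1] := by
  match l, h, he, hsum with
  | [], _, _, hsum => simp [alternant, cont, contMid] at hsum
  | [_], _, he, _ => simp at he
  | [x, y], _, _, hsum =>
    rw [alternant_pair_sub_sum] at hsum
    rcases mul_eq_zero.mp (by linarith : (x - 1) * (y - 1) = 0) with hx | hy
    · exact Or.inr (Or.inl ⟨y, by rw [sub_eq_zero.mp hx]⟩)
    · exact Or.inl ⟨x, by rw [sub_eq_zero.mp hy]⟩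
  | [_, _, _], _, he, _ => simp [Nat.even_iff] at he
  | x :: y :: z :: w :: r, h, he, hsum =>
    have hx := h x (by simp)
    have htail := neg_one_le_alternant_sub_sum (l := z :: w :: r) (fun u hu => h u (by simp_all))
      (by simpa [Nat.even_add_one] using he)
    have hc₁ := one_lt_cont (l := y :: z :: w :: r) (by simp) fun u hu => h u (by simp_all)
    have hc₂ := one_le_cont (l := w :: r) fun u hu => h u (by simp_all)
    have key := alternant_sub_sum_cons_cons_ge (List.cons_ne_nil w r) h
    have hx₁ : x = 1 := by nlinarith
    have hwr : w :: r = [1] :=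
      eq_singleton_one_of_cont_eq_one (List.cons_ne_nil w r) (fun u hu => h u (by simp_all))
        (by nlinarith)
    obtain ⟨rfl, rfl⟩ : w = 1 ∧ r = [] := by simpa using hwr
    exact Or.inr (Or.inr ⟨y, z, by rw [hx₁]⟩)

theorem sum_le_alternant_add_one (l : List ℤ) (a : ℤ)
    (hpos : ∀ x ∈ l, 0 < x) (heven : Even l.length) (ha : alternant l = a) :
    l.sum ≤ a + 1 ∧
      (l.sum = a + 1 ↔
        l = [a, 1] ∨ l = [1, a] ∨
          ∃ k : ℤ, 2 ≤ k ∧ k ≤ a - 1 ∧ l = [1, a - k, k - 1, 1]) := by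
  refine ⟨by linarith [neg_one_le_alternant_sub_sum hpos heven], ⟨fun h => ?_, ?_⟩⟩
  · rcases eq_of_alternant_sub_sum_eq_neg_one hpos heven (by linarith) with
      ⟨x, rfl⟩ | ⟨y, rfl⟩ | ⟨y, z, rfl⟩
    · exact Or.inl (by simp at h ⊢; linarith)
    · exact Or.inr (Or.inl (by simp at h ⊢; linarith))
    · have hy := hpos y (by simp)
      have hz := hpos z (by simp)
      have ha' : a = y + z + 1 := by
        rw [← ha]
        simp only [alternant, cont, contMid, List.dropLast_cons_cons, List.dropLast_singleton]
        ring
      exact Or.inr (Or.inr ⟨z + 1, by omega, by omega, by rw [ha']; ring_nf⟩)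
  · rintro (rfl | rfl | ⟨k, -, -, rfl⟩) <;>
    simp only [List.sum_cons, List.sum_nil] <;> ring
end
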